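/- For V_28 with any a ∈ [0,1]: if x⁽⁰⁾ ∈ S² with x₁⁽⁰⁾ > 0, then the trajectory V_28ⁿ(x⁽⁰⁾) converges to e₁ = (1,0,0); in particular the first coordinate satisfies x₁⁽ⁿ⁺¹⁾ = x₁⁽ⁿ⁾(2 − x₁⁽ⁿ⁾) and converges monotonically to 1. -/

import Mathlib

/-!
The first coordinate evolves on its own: `1 - x₁' = (1 - x₁)²`, so `1 - x₁⁽ⁿ⁾ = (1 - x₁⁽⁰⁾)^(2ⁿ)`,
which decreases to `0` because `0 ≤ 1 - x₁⁽⁰⁾ < 1`. For `a ∈ [0,1]` the map preserves the simplex,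
where the other two coordinates lie in `[0, 1 - x₁]`, so they are squeezed to `0`.
-/

open Filter Topology

def V28 (a : ℝ) (p : ℝ × ℝ × ℝ) : ℝ × ℝ × ℝ :=
  (p.1^2 + 2*p.1*(1-p.1), p.2.2^2 + 2*a*p.2.1*p.2.2, p.2.1^2 + 2*(1-a)*p.2.1*p.2.2)

def S2 : Set (ℝ × ℝ × ℝ) :=
  {p | 0 ≤ p.1 ∧ 0 ≤ p.2.1 ∧ 0 ≤ p.2.2 ∧ p.1 + p.2.1 + p.2.2 = 1}

lemma V28_fst (a : ℝ) (p : ℝ × ℝ × ℝ) : (V28 a p).1 = p.1 * (2 - p.1) := by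
  simp only [V28]; ring

lemma one_sub_iterate_V28_fst (a : ℝ) (p : ℝ × ℝ × ℝ) (n : ℕ) :
    1 - ((V28 a)^[n] p).1 = (1 - p.1) ^ 2 ^ n := by
  induction n with
  | zero => simp
  | succ n ih =>
    rw [Function.iterate_succ_apply', V28_fst, pow_succ, pow_mul, ← ih]
    ring

lemma V28_mapsTo_S2 {a : ℝ} (ha : a ∈ Set.Icc (0:ℝ) 1) : Set.MapsTo (V28 a) S2 S2 := by
  rintro p ⟨h₁, h₂, h₃, hsum⟩
  obtain ⟨ha₀, ha₁⟩ := ha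
  have h₂₃ : 0 ≤ p.2.1 * p.2.2 := mul_nonneg h₂ h₃
  simp only [V28]
  refine ⟨by nlinarith, ?_, ?_, ?_⟩
  · nlinarith [mul_nonneg ha₀ h₂₃]
  · nlinarith [mul_nonneg (sub_nonneg.2 ha₁) h₂₃]
  · have h₁' : p.1 = 1 - (p.2.1 + p.2.2) := by linarith
    rw [h₁']; ring

lemma fst_le_one_of_mem_S2 {p : ℝ × ℝ × ℝ} (hp : p ∈ S2) : p.1 ≤ 1 := by
  obtain ⟨_, h₂, h₃, hsum⟩ := hp; linarith

lemma tendsto_e1_of_mem_S2 {ι : Type*} {l : Filter ι} {u : ι → ℝ × ℝ × ℝ}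
    (hu : ∀ i, u i ∈ S2) (h : Tendsto (fun i => (u i).1) l (𝓝 1)) :
    Tendsto u l (𝓝 ((1:ℝ), (0:ℝ), (0:ℝ))) := by
  have hgap : Tendsto (fun i => 1 - (u i).1) l (𝓝 0) := by
    simpa using (tendsto_const_nhds (x := (1:ℝ))).sub h
  have h₂ : Tendsto (fun i => (u i).2.1) l (𝓝 0) :=
    squeeze_zero (fun i => (hu i).2.1) (fun i => by linarith [(hu i).2.2.1, (hu i).2.2.2]) hgap
  have h₃ : Tendsto (fun i => (u i).2.2) l (𝓝 0) :=
    squeeze_zero (fun i => (hu i).2.2.1) (fun i => by linarith [(hu i).2.1, (hu i).2.2.2]) hgap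
  exact h.prodMk_nhds (h₂.prodMk_nhds h₃)

theorem V28_converges_e1 (a : ℝ) (ha : a ∈ Set.Icc (0:ℝ) 1)
    (x : ℝ × ℝ × ℝ) (hx : x ∈ S2) (h1 : 0 < x.1) :
    Filter.Tendsto (fun n => (V28 a)^[n] x) Filter.atTop
      (nhds ((1:ℝ), (0:ℝ), (0:ℝ))) ∧
    (∀ n : ℕ, ((V28 a)^[n+1] x).1 = ((V28 a)^[n] x).1 * (2 - ((V28 a)^[n] x).1)) ∧
    Monotone (fun n => ((V28 a)^[n] x).1) ∧
    Filter.Tendsto (fun n => ((V28 a)^[n] x).1) Filter.atTop (nhds 1) := by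
  set r := 1 - x.1
  have hr₀ : 0 ≤ r := sub_nonneg.2 (fst_le_one_of_mem_S2 hx)
  have hr₁ : r < 1 := by linarith
  have hfst : (fun n => ((V28 a)^[n] x).1) = fun n => 1 - r ^ 2 ^ n := by
    funext n; linarith [one_sub_iterate_V28_fst a x n]
  have hlim : Tendsto (fun n => ((V28 a)^[n] x).1) atTop (𝓝 1) := by
    rw [hfst]
    simpa using tendsto_const_nhds.sub ((tendsto_pow_atTop_nhds_zero_of_lt_one hr₀ hr₁).comp
      (tendsto_pow_atTop_atTop_of_one_lt one_lt_two))
  refine ⟨tendsto_e1_of_mem_S2 (fun n => (V28_mapsTo_S2 ha).iterate n hx) hlim,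
    fun n => by rw [Function.iterate_succ_apply', V28_fst], ?_, hlim⟩
  rw [hfst]
  exact fun m n hmn => sub_le_sub_left
    (pow_le_pow_of_le_one hr₀ hr₁.le (Nat.pow_le_pow_right two_pos hmn)) 1
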